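/- For every fixed even integer k ≥ 2, as m → ∞, S^{(m)}((2m)^k) ∼ (2^k(2^k−1)/π^k)·ζ(k)·m^{k−1}. -/

import Mathlib

/-!
Filtering the multiples of `2m+1` with the `(2m+1)`-th roots of unity `u` writes `(2m+1) S` as the
sum over `u` of `∑_{n < (2m)^k} (-1)^{s(n)} u^n`, which factors over the `k` base-`2m` digits. As
`2m ≡ -1 (mod 2m+1)`, the digit factors alternate between `g(u)` and `g(u⁻¹)`, where
`g(w) = ∑_{d<2m} (-w)^d`, and for `u = exp(2ix)` one has `g(u) g(u⁻¹) = tan² x`; folding the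
tangents by symmetry gives `S = 2/(2m+1) ∑_{λ<m} cot^k((2λ+1)h)` with `h = π/(4m+2)`. Since
`0 < y cot y ≤ 1` on `(0, π/2)` and `y cot y → 1`, Tannery's theorem gives
`∑_{λ<m} (h cot((2λ+1)h))^k → ∑ (2λ+1)^{-k}`, which is `(1 - 2^{-k}) ζ(k)`.
-/

open Real Filter

def S (m x : ℕ) : ℤ :=
  ∑ n ∈ Finset.range x, if (2 * m + 1) ∣ n then (-1 : ℤ) ^ ((Nat.digits (2 * m) n).sum) else 0

open Finset Topology

theorem Finset.sum_range_mul_eq_sum_sum {M : Type*} [AddCommMonoid M] (f : ℕ → M) (B N : ℕ) :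
    ∑ n ∈ range (B * N), f n = ∑ q ∈ range N, ∑ d ∈ range B, f (B * q + d) := by
  induction N with
  | zero => simp
  | succ N ih => rw [mul_add_one, sum_range_add, ih, sum_range_succ]

theorem Nat.digits_sum_add_mul {B : ℕ} (hB : 1 < B) {d : ℕ} (hd : d < B) (q : ℕ) :
    (Nat.digits B (d + B * q)).sum = d + (Nat.digits B q).sum := by
  rcases eq_or_ne d 0 with rfl | hd0
  · rcases eq_or_ne q 0 with rfl | hq0
    · simp
    · rw [Nat.digits_add B hB 0 q hd (Or.inr hq0), List.sum_cons]
  · rw [Nat.digits_add B hB d q hd (Or.inl hd0), List.sum_cons]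

theorem sum_range_pow_digits_sum_mul_pow {R : Type*} [CommSemiring R] {B : ℕ} (hB : 1 < B)
    (c z : R) (k : ℕ) :
    ∑ n ∈ range (B ^ k), c ^ (Nat.digits B n).sum * z ^ n =
      ∏ i ∈ range k, ∑ d ∈ range B, c ^ d * (z ^ B ^ i) ^ d := by
  induction k generalizing z with
  | zero => simp
  | succ k ih =>
    have hsplit : ∀ q, ∑ d ∈ range B, c ^ (Nat.digits B (B * q + d)).sum * z ^ (B * q + d) =
        (∑ d ∈ range B, c ^ d * z ^ d) * (c ^ (Nat.digits B q).sum * (z ^ B) ^ q) := by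
      intro q
      rw [sum_mul]
      refine sum_congr rfl fun d hd => ?_
      rw [add_comm (B * q), Nat.digits_sum_add_mul hB (mem_range.mp hd), pow_add, pow_add,
        pow_mul]
      ring
    rw [pow_succ', sum_range_mul_eq_sum_sum, sum_congr rfl fun q _ => hsplit q, ← mul_sum, ih,
      prod_range_succ']
    simp only [pow_zero, pow_one, ← pow_mul, ← pow_succ']
    ring

theorem IsPrimitiveRoot.sum_range_pow_pow_eq_ite {K : Type*} [CommRing K] [IsDomain K] {ζ : K}
    {M : ℕ} (hζ : IsPrimitiveRoot ζ M) (n : ℕ) :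
    ∑ j ∈ range M, (ζ ^ j) ^ n = if M ∣ n then (M : K) else 0 := by
  simp_rw [← pow_mul, mul_comm _ n, pow_mul]
  split_ifs with h
  · simp [(hζ.pow_eq_one_iff_dvd n).mpr h]
  · have hne : ζ ^ n - 1 ≠ 0 := sub_ne_zero.mpr fun h' => h ((hζ.pow_eq_one_iff_dvd n).mp h')
    apply (mul_left_inj' hne).mp
    rw [geom_sum_mul, ← pow_mul, mul_comm, pow_mul, hζ.pow_eq_one, one_pow, sub_self, zero_mul]

theorem IsPrimitiveRoot.natCast_mul_sum_ite_dvd {K : Type*} [CommRing K] [IsDomain K] {ζ : K}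
    {M : ℕ} (hζ : IsPrimitiveRoot ζ M) (s : Finset ℕ) (f : ℕ → K) :
    (M : K) * ∑ n ∈ s, (if M ∣ n then f n else 0) = ∑ j ∈ range M, ∑ n ∈ s, f n * (ζ ^ j) ^ n := by
  rw [sum_comm, mul_sum]
  refine sum_congr rfl fun n _ => ?_
  rw [← mul_sum, hζ.sum_range_pow_pow_eq_ite]
  split_ifs <;> ring

theorem sum_range_neg_one_pow_mul_pow {K : Type*} [Field K] {B : ℕ} (hB : Even B) {w : K}
    (hw : w ≠ -1) : ∑ d ∈ range B, (-1) ^ d * w ^ d = (1 - w ^ B) / (1 + w) := by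
  have hw' : -w - 1 ≠ 0 := fun h => hw (by linear_combination -h)
  simp_rw [← mul_pow, neg_one_mul]
  rw [geom_sum_eq (fun h => hw (by linear_combination -h)), hB.neg_pow,
    div_eq_div_iff hw' (fun h => hw (by linear_combination h))]
  ring

theorem pow_pow_eq_ite_of_pow_succ_eq_one {K : Type*} [DivisionRing K] {B : ℕ} {u : K}
    (hu : u ^ (B + 1) = 1) (i : ℕ) : u ^ B ^ i = if Even i then u else u⁻¹ := by
  have hinv : ∀ v : K, v ^ (B + 1) = 1 → v ^ B = v⁻¹ := fun v hv =>
    eq_inv_of_mul_eq_one_left (by rwa [← pow_succ])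
  induction i with
  | zero => simp
  | succ i ih =>
    rw [pow_succ, pow_mul, ih]
    by_cases h : Even i
    · simp [h, Nat.even_add_one, hinv u hu]
    · simp [h, Nat.even_add_one, hinv u⁻¹ (by rw [inv_pow, hu, inv_one])]

theorem prod_range_two_mul_ite_even {M : Type*} [CommMonoid M] (a b : M) (r : ℕ) :
    ∏ i ∈ range (2 * r), (if Even i then a else b) = (a * b) ^ r := by
  induction r with
  | zero => simp
  | succ r ih =>
    rw [mul_add_one, prod_range_succ, prod_range_succ, ih, pow_succ]
    simp [mul_assoc]

open Complex in
theorem Complex.tan_sq_eq_of_exp_ne_neg_one {z : ℂ} (hu : cexp (2 * z * I) ≠ -1) :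
    (1 - (cexp (2 * z * I))⁻¹) / (1 + cexp (2 * z * I)) *
      ((1 - cexp (2 * z * I)) / (1 + (cexp (2 * z * I))⁻¹)) = tan z ^ 2 := by
  set w := cexp (z * I)
  have hw : w ≠ 0 := exp_ne_zero _
  have hu' : cexp (2 * z * I) = w ^ 2 := by
    rw [← exp_nat_mul]; ring_nf
  have hw2 : w ^ 2 + 1 ≠ 0 := fun h => hu (by rw [hu']; linear_combination h)
  have hsin : sin z = (w⁻¹ - w) * I / 2 := by
    rw [Complex.sin, ← exp_neg, neg_mul]
  have hcos : cos z = (w + w⁻¹) / 2 := by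
    rw [Complex.cos, ← exp_neg, neg_mul]
  rw [hu', tan_eq_sin_div_cos, hsin, hcos, add_comm 1 (w ^ 2)]
  field_simp
  rw [I_sq]
  ring

theorem prod_range_sum_neg_one_pow_mul_pow_pow_of_pow_succ_eq_one {K : Type*} [Field K] {B : ℕ}
    (hB : Even B) {u : K} (hu : u ^ (B + 1) = 1) (hu1 : u ≠ -1) (r : ℕ) :
    ∏ i ∈ range (2 * r), ∑ d ∈ range B, (-1) ^ d * (u ^ B ^ i) ^ d =
      ((1 - u⁻¹) / (1 + u) * ((1 - u) / (1 + u⁻¹))) ^ r := by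
  have huB : u ^ B = u⁻¹ := by simpa using pow_pow_eq_ite_of_pow_succ_eq_one hu 1
  have hu1' : u⁻¹ ≠ -1 := fun h => hu1 (by rw [← inv_inv u, h, inv_neg_one])
  rw [← prod_range_two_mul_ite_even]
  refine prod_congr rfl fun i _ => ?_
  rw [pow_pow_eq_ite_of_pow_succ_eq_one hu i]
  split_ifs
  · rw [sum_range_neg_one_pow_mul_pow hB hu1, huB]
  · rw [sum_range_neg_one_pow_mul_pow hB hu1', inv_pow, huB, inv_inv]

theorem mul_S_eq_sum_tan_pow {m k : ℕ} (hm : 0 < m) (hk : Even k) :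
    (2 * m + 1 : ℝ) * S m ((2 * m) ^ k) =
      ∑ j ∈ range (2 * m + 1), tan (π * j / (2 * m + 1)) ^ k := by
  obtain ⟨r, rfl⟩ := hk
  set ζ := Complex.exp (2 * π * Complex.I / (2 * m + 1 : ℕ))
  have hζ : IsPrimitiveRoot ζ (2 * m + 1) := Complex.isPrimitiveRoot_exp _ (by omega)
  have hζj : ∀ j : ℕ, ζ ^ j = Complex.exp (2 * ((π * j / (2 * m + 1) : ℝ) : ℂ) * Complex.I) := by
    intro j
    rw [← Complex.exp_nat_mul]
    push_cast
    ring_nf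
  have hS : ((S m ((2 * m) ^ (r + r)) : ℤ) : ℂ) = ∑ n ∈ range ((2 * m) ^ (r + r)),
      if 2 * m + 1 ∣ n then (-1 : ℂ) ^ (Nat.digits (2 * m) n).sum else 0 := by
    push_cast [S, apply_ite (Int.cast : ℤ → ℂ)]
    rfl
  suffices ((2 * m + 1 : ℕ) : ℂ) * ((S m ((2 * m) ^ (r + r)) : ℤ) : ℂ) =
      ∑ j ∈ range (2 * m + 1), ((tan (π * j / (2 * m + 1)) : ℝ) : ℂ) ^ (r + r) by
    exact_mod_cast this
  rw [hS, hζ.natCast_mul_sum_ite_dvd]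
  refine sum_congr rfl fun j _ => ?_
  have hpow : (ζ ^ j) ^ (2 * m + 1) = 1 := by
    rw [← pow_mul, mul_comm, pow_mul, hζ.pow_eq_one, one_pow]
  have hne : ζ ^ j ≠ -1 := by
    intro h
    rw [h, (odd_two_mul_add_one m).neg_one_pow] at hpow
    norm_num at hpow
  rw [sum_range_pow_digits_sum_mul_pow (by omega), ← two_mul,
    prod_range_sum_neg_one_pow_mul_pow_pow_of_pow_succ_eq_one (even_two_mul m) hpow hne, hζj,
    Complex.tan_sq_eq_of_exp_ne_neg_one (hζj j ▸ hne), ← pow_mul, Complex.ofReal_tan]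

theorem sum_range_tan_pow_eq_two_mul_sum_cot_pow {m k : ℕ} (hk : Even k) (hk0 : k ≠ 0) :
    ∑ j ∈ range (2 * m + 1), tan (π * j / (2 * m + 1)) ^ k =
      2 * ∑ l ∈ range m, cot ((2 * l + 1) * (π / (4 * m + 2))) ^ k := by
  set f : ℕ → ℝ := fun j => tan (π * j / (2 * m + 1)) ^ k
  have hlow : ∀ l < m, f (m - l) = cot ((2 * l + 1) * (π / (4 * m + 2))) ^ k := by
    intro l hl
    have : π * ((m - l : ℕ) : ℝ) / (2 * m + 1) = π / 2 - (2 * l + 1) * (π / (4 * m + 2)) := by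
      rw [Nat.cast_sub hl.le]
      field_simp
      ring
    simp only [f, this, tan_pi_div_two_sub, tan_inv_eq_cot]
  have hhigh : ∀ l < m, f (m + 1 + l) = cot ((2 * l + 1) * (π / (4 * m + 2))) ^ k := by
    intro l hl
    have : π * ((m + 1 + l : ℕ) : ℝ) / (2 * m + 1) =
        π - (π / 2 - (2 * l + 1) * (π / (4 * m + 2))) := by
      push_cast
      field_simp
      ring
    simp only [f, this, tan_pi_sub, hk.neg_pow, tan_pi_div_two_sub, tan_inv_eq_cot]
  have hreflect : ∑ i ∈ range m, f (i + 1) = ∑ l ∈ range m, f (m - l) := by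
    rw [← sum_range_reflect]
    exact sum_congr rfl fun l hl => by have := mem_range.mp hl; congr 1; omega
  rw [show 2 * m + 1 = m + 1 + m by ring, sum_range_add, sum_range_succ', hreflect,
    sum_congr rfl fun l hl => hlow l (mem_range.mp hl),
    sum_congr rfl fun l hl => hhigh l (mem_range.mp hl)]
  simp [zero_pow hk0, two_mul]

theorem Real.tendsto_mul_cot_nhdsNE_zero : Tendsto (fun x => x * cot x) (𝓝[≠] 0) (𝓝 1) := by
  have hcont : Tendsto (fun x => cos x / sinc x) (𝓝 0) (𝓝 1) := by
    have h := (continuous_cos.tendsto 0).div (continuous_sinc.tendsto 0) (by simp)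
    rwa [cos_zero, sinc_zero, div_one] at h
  refine (hcont.mono_left nhdsWithin_le_nhds).congr' ?_
  filter_upwards [self_mem_nhdsWithin] with x hx
  rw [sinc_of_ne_zero hx, cot_eq_cos_div_sin]
  field_simp

theorem Real.mul_cot_pos {x : ℝ} (h0 : 0 < x) (h1 : x < π / 2) : 0 < x * cot x := by
  rw [← tan_inv_eq_cot]
  have := tan_pos_of_pos_of_lt_pi_div_two h0 h1
  positivity

theorem Real.mul_cot_le_one {x : ℝ} (h0 : 0 < x) (h1 : x < π / 2) : x * cot x ≤ 1 := by
  rw [← tan_inv_eq_cot, ← div_eq_mul_inv, div_le_one (tan_pos_of_pos_of_lt_pi_div_two h0 h1)]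
  exact (lt_tan h0 h1).le

theorem summable_one_div_two_mul_add_one_pow {k : ℕ} (hk : 1 < k) :
    Summable fun l : ℕ => 1 / (2 * l + 1 : ℝ) ^ k := by
  refine ((summable_one_div_nat_pow.mpr hk).comp_injective (i := fun l : ℕ => 2 * l + 1)
    fun a b hab => by simp only at hab; omega).congr fun l => ?_
  simp

theorem tendsto_sum_range_mul_cot_pow {k : ℕ} (hk : 1 < k) {h : ℕ → ℝ} (h_pos : ∀ m, 0 < h m)
    (h_le : ∀ m, (2 * m + 1) * h m ≤ π / 2) :
    Tendsto (fun m => ∑ l ∈ range m, (h m * cot ((2 * l + 1) * h m)) ^ k) atTop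
      (𝓝 (∑' l : ℕ, 1 / (2 * l + 1 : ℝ) ^ k)) := by
  have h_lim : Tendsto h atTop (𝓝 0) := by
    refine squeeze_zero (fun m => (h_pos m).le) (g := fun m : ℕ => π / 2 / (2 * m + 1))
      (fun m => (le_div_iff₀' (by positivity)).mpr (h_le m)) ?_
    exact tendsto_const_nhds.div_atTop
      (tendsto_natCast_atTop_atTop.const_mul_atTop two_pos |>.atTop_add tendsto_const_nhds)
  have hy (l : ℕ) : Tendsto (fun m => (2 * l + 1) * h m) atTop (𝓝[≠] 0) := by
    refine tendsto_nhdsWithin_of_tendsto_nhds_of_eventually_within _ ?_ ?_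
    · simpa using h_lim.const_mul (2 * l + 1 : ℝ)
    · exact Eventually.of_forall fun m => (mul_pos (by positivity) (h_pos m)).ne'
  have hterm (l m : ℕ) : h m * cot ((2 * l + 1) * h m) =
      1 / (2 * l + 1) * ((2 * l + 1) * h m * cot ((2 * l + 1) * h m)) := by
    field_simp
  simp_rw [sum_eq_tsum_indicator _ (range _)]
  refine tendsto_tsum_of_dominated_convergence (summable_one_div_two_mul_add_one_pow hk)
    (fun l => ?_) (Eventually.of_forall fun m l => ?_)
  · have hlim := ((tendsto_mul_cot_nhdsNE_zero.comp (hy l)).const_mul (1 / (2 * l + 1 : ℝ))).pow k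
    rw [mul_one, div_pow, one_pow] at hlim
    refine hlim.congr' ?_
    filter_upwards [eventually_gt_atTop l] with m hm
    rw [Set.indicator_of_mem (by simpa using hm), hterm]
    rfl
  · by_cases hlm : l < m
    · have hy0 : 0 < (2 * l + 1) * h m := mul_pos (by positivity) (h_pos m)
      have hy1 : (2 * l + 1) * h m < π / 2 := by
        refine lt_of_lt_of_le (mul_lt_mul_of_pos_right ?_ (h_pos m)) (h_le m)
        exact_mod_cast (by omega : 2 * l + 1 < 2 * m + 1)
      have hc0 := mul_cot_pos hy0 hy1
      have hc : 0 ≤ 1 / (2 * l + 1 : ℝ) * ((2 * l + 1) * h m * cot ((2 * l + 1) * h m)) := by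
        positivity
      rw [Set.indicator_of_mem (by simpa using hlm), hterm, norm_pow, Real.norm_eq_abs,
        abs_of_nonneg hc, ← one_div_pow]
      exact pow_le_pow_left₀ hc (mul_le_of_le_one_right (by positivity) (mul_cot_le_one hy0 hy1)) k
    · rw [Set.indicator_of_notMem (by simpa using hlm), norm_zero]
      positivity

theorem tsum_one_div_two_mul_add_one_pow {k : ℕ} (hk : 1 < k) :
    ∑' l : ℕ, 1 / (2 * l + 1 : ℝ) ^ k = (1 - 1 / 2 ^ k) * ∑' n : ℕ+, 1 / (n : ℝ) ^ k := by
  set f : ℕ → ℝ := fun n => 1 / (n : ℝ) ^ k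
  have hf : Summable f := summable_one_div_nat_pow.mpr hk
  have heven : ∑' l, f (2 * l) = 1 / 2 ^ k * ∑' l, f l := by
    rw [← tsum_mul_left]
    simp [f, mul_pow, mul_comm]
  have hodd : ∑' l, f (2 * l + 1) = ∑' l : ℕ, 1 / (2 * l + 1 : ℝ) ^ k := by simp [f]
  have hsplit := tsum_even_add_odd (hf.comp_injective (mul_right_injective₀ two_ne_zero))
    (hf.comp_injective fun a b hab => by omega)
  rw [tsum_pnat_eq_tsum_of_eq_zero (f := f) (by simp [f]; omega)]
  linear_combination hsplit - heven - hodd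

theorem S_two_mul_pow_eq_sum_cot_pow {m k : ℕ} (hm : 0 < m) (hk : Even k) (hk0 : k ≠ 0) :
    (S m ((2 * m) ^ k) : ℝ) =
      2 / (2 * m + 1) * ∑ l ∈ range m, cot ((2 * l + 1) * (π / (4 * m + 2))) ^ k := by
  have h := mul_S_eq_sum_tan_pow hm hk
  rw [sum_range_tan_pow_eq_two_mul_sum_cot_pow hk hk0] at h
  rw [div_mul_eq_mul_div, eq_div_iff (by positivity), mul_comm]
  exact h

theorem tsum_pnat_one_div_pow_pos {k : ℕ} (hk : 1 < k) : 0 < ∑' n : ℕ+, 1 / (n : ℝ) ^ k :=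
  ((summable_one_div_nat_pow.mpr hk).comp_injective PNat.coe_injective).tsum_pos
    (fun _ => one_div_nonneg.mpr (by positivity)) 1 (by simp)

theorem S_asymp_in_m (k : ℕ) (hk : 2 ≤ k) (hke : Even k) :
    Filter.Tendsto
      (fun m : ℕ => (S m ((2 * m) ^ k) : ℝ) /
        ((2 ^ k * (2 ^ k - 1) / Real.pi ^ k) * (∑' n : ℕ+, (1 : ℝ) / (n : ℝ) ^ k) *
          (m : ℝ) ^ (k - 1)))
      Filter.atTop (nhds 1) := by
  have hZ := tsum_pnat_one_div_pow_pos hk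
  have hT := tendsto_sum_range_mul_cot_pow hk (h := fun m => π / (4 * m + 2))
    (fun m => by positivity) (fun m => by field_simp; linarith [pi_pos])
  rw [tsum_one_div_two_mul_add_one_pow hk] at hT
  have hq : Tendsto (fun m : ℕ => (2 * m + 1) / m : ℕ → ℝ) atTop (𝓝 2) := by
    simpa [add_comm] using tendsto_add_mul_div_add_mul_atTop_nhds (1 : ℝ) 0 2 one_ne_zero
  obtain ⟨K, rfl⟩ : ∃ K, k = K + 1 := ⟨k - 1, by omega⟩
  set Z := ∑' n : ℕ+, (1 : ℝ) / (n : ℝ) ^ (K + 1)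
  have h2K : (2 : ℝ) ^ (K + 1) - 1 ≠ 0 := (sub_pos.mpr (one_lt_pow₀ one_lt_two (by omega))).ne'
  have hlim := (tendsto_const_nhds (x := 2 / ((2 ^ (K + 1) - 1) * Z))).mul (hq.pow K) |>.mul hT
  rw [show 2 / ((2 ^ (K + 1) - 1) * Z) * 2 ^ K * ((1 - 1 / 2 ^ (K + 1)) * Z) = (1 : ℝ) by
    field_simp; ring] at hlim
  refine hlim.congr' ?_
  filter_upwards [eventually_gt_atTop 0] with m hm
  rw [S_two_mul_pow_eq_sum_cot_pow hm hke (by omega)]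
  simp only [mul_pow, ← mul_sum, Nat.add_sub_cancel]
  generalize ∑ l ∈ range m, cot ((2 * l + 1) * (π / (4 * m + 2))) ^ (K + 1) = C
  have hm' : (m : ℝ) ≠ 0 := by positivity
  rw [show (4 * m + 2 : ℝ) = 2 * (2 * m + 1) by ring]
  simp only [div_pow, mul_pow]
  field_simp
  ring
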